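/- arXiv:1701.07980 — 7 statements merged into one kernel-verified Lean document; each statement's English description precedes it below -/
import Mathlib

section
/- Let K be a compact Lie group. Then the set of characters of K — that is, the set of functions K → ℂ of the form k ↦ tr(r(k)) for some continuous group homomorphism r : K → GL(V) with V a finite-dimensional complex vector space — is a discrete subspace of the space C(K,ℂ) of continuous complex-valued functions on K equipped with the compact-open topology: every character has a neighborhood in C(K,ℂ) containing no other character of K. -/
open scoped Manifold

noncomputable section Paper

/-- The conjugate `c_g ∘ φ` of a continuous homomorphism `φ` by a group element `g`. -/
def conjCMH {K G : Type*} [Group K] [TopologicalSpace K] [Group G]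
    [TopologicalSpace G] [IsTopologicalGroup G] (g : G) (φ : ContinuousMonoidHom K G) :
    ContinuousMonoidHom K G :=
  { toFun := fun k => g * φ k * g⁻¹
    map_one' := by simp
    map_mul' := fun a b => by
      show g * φ (a * b) * g⁻¹ = (g * φ a * g⁻¹) * (g * φ b * g⁻¹)
      rw [map_mul]; group
    continuous_toFun := (continuous_const.mul (map_continuous φ)).mul continuous_const }

/-- The relation on `hom(K,G)` generated by: lying in the same path-component, and being
conjugate. -/
def homRel {K G : Type*} [Group K] [TopologicalSpace K] [Group G]
    [TopologicalSpace G] [IsTopologicalGroup G] (φ ψ : ContinuousMonoidHom K G) : Prop :=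
  Joined φ ψ ∨ ∃ g : G, ψ = conjCMH g φ

/-- `hom(K,G;ρ)`: the smallest subset of `hom(K,G)` containing `ρ` which is a union of
path-components and closed under conjugation, i.e. the equivalence class of `ρ` under the
equivalence relation generated by `homRel`. -/
def homClass {K G : Type*} [Group K] [TopologicalSpace K] [Group G]
    [TopologicalSpace G] [IsTopologicalGroup G] (ρ : ContinuousMonoidHom K G) :
    Set (ContinuousMonoidHom K G) :=
  {φ | Relation.EqvGen homRel ρ φ}

/-- `Aut(K)`: the group of homeomorphic group automorphisms of `K`, as a subgroup of `MulAut K`. -/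
def contAut (K : Type*) [Group K] [TopologicalSpace K] : Subgroup (MulAut K) where
  carrier := {e | Continuous e ∧ Continuous e.symm}
  one_mem' := ⟨continuous_id, continuous_id⟩
  mul_mem' := by
    intro a b ha hb
    refine ⟨?_, ?_⟩
    · have h : ⇑(a * b) = ⇑a ∘ ⇑b := rfl
      exact h ▸ ha.1.comp hb.1
    · have h : ⇑(a * b).symm = ⇑b.symm ∘ ⇑a.symm := rfl
      exact h ▸ hb.2.comp ha.2
  inv_mem' := by
    intro a ha
    exact ⟨ha.2, ha.1⟩

/-- Precomposition of a continuous homomorphism with a (continuous) automorphism. -/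
def precompCMH {K G : Type*} [Group K] [TopologicalSpace K] [Group G]
    [TopologicalSpace G] (φ : ContinuousMonoidHom K G) (μ : contAut K) :
    ContinuousMonoidHom K G :=
  ⟨φ.toMonoidHom.comp (μ : MulAut K).toMonoidHom, (map_continuous φ).comp μ.property.1⟩

theorem precompCMH_one {K G : Type*} [Group K] [TopologicalSpace K] [Group G]
    [TopologicalSpace G] (φ : ContinuousMonoidHom K G) : precompCMH φ 1 = φ := by
  ext k; rfl

theorem precompCMH_mul {K G : Type*} [Group K] [TopologicalSpace K] [Group G]
    [TopologicalSpace G] (φ : ContinuousMonoidHom K G) (μ ν : contAut K) :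
    precompCMH φ (μ * ν) = precompCMH (precompCMH φ μ) ν := by
  ext k; rfl

/-- The subgroup of `Aut(K)` of automorphisms `μ` whose right composition action preserves a
given subset `S` of a set `X` with a right `Aut(K)`-action `act`. -/
def monOf {K X : Type*} [Group K] [TopologicalSpace K]
    (act : X → contAut K → X) (hone : ∀ x, act x 1 = x)
    (hmul : ∀ x μ ν, act x (μ * ν) = act (act x μ) ν) (S : Set X) :
    Subgroup (contAut K) where
  carrier := {μ | (fun x => act x μ) '' S = S}
  one_mem' := by
    simp only [Set.mem_setOf_eq, hone, Set.image_id']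
  mul_mem' := by
    intro a b ha hb
    simp only [Set.mem_setOf_eq] at ha hb ⊢
    have key : (fun x => act x (a * b)) '' S = (fun x => act x b) '' ((fun x => act x a) '' S) := by
      rw [Set.image_image]
      exact Set.image_congr' fun x => (hmul x a b)
    rw [key, ha, hb]
  inv_mem' := by
    intro a ha
    simp only [Set.mem_setOf_eq] at ha ⊢
    conv_lhs => rw [← ha]
    rw [Set.image_image]
    have h1 : ∀ x, act (act x a) a⁻¹ = x := fun x => by
      rw [← hmul]; simp [hone]
    calc (fun x => act (act x a) a⁻¹) '' S = (fun x => x) '' S :=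
          Set.image_congr' h1
      _ = S := Set.image_id' S

/-- The monodromy group `Mon(G;ρ) ≤ Aut(K)`. -/
def Mon {K G : Type*} [Group K] [TopologicalSpace K] [Group G]
    [TopologicalSpace G] [IsTopologicalGroup G] (ρ : ContinuousMonoidHom K G) :
    Subgroup (contAut K) :=
  monOf precompCMH precompCMH_one precompCMH_mul (homClass ρ)

theorem mem_Mon_iff {K G : Type*} [Group K] [TopologicalSpace K] [Group G]
    [TopologicalSpace G] [IsTopologicalGroup G] (ρ : ContinuousMonoidHom K G) (μ : contAut K) :
    μ ∈ Mon ρ ↔ (fun φ => precompCMH φ μ) '' homClass ρ = homClass ρ :=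
  Iff.rfl

/-- `Inn(K)`: the subgroup of `Aut(K)` of inner automorphisms. -/
def innAut (K : Type*) [Group K] [TopologicalSpace K] : Subgroup (contAut K) where
  carrier := {μ | ∃ k : K, (μ : MulAut K) = MulAut.conj k}
  one_mem' := ⟨1, by simp⟩
  mul_mem' := by
    rintro a b ⟨k, hk⟩ ⟨l, hl⟩
    exact ⟨k * l, by rw [Subgroup.coe_mul, hk, hl, map_mul]⟩
  inv_mem' := by
    rintro a ⟨k, hk⟩
    exact ⟨k⁻¹, by
      rw [show ((a⁻¹ : contAut K) : MulAut K) = (a : MulAut K)⁻¹ from rfl, hk, map_inv]⟩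

/-- `χ : G → ℂ` is a character of `G`: the trace of some continuous finite-dimensional complex
representation of `G`. -/
def IsCharacter {G : Type*} [Group G] [TopologicalSpace G] (χ : G → ℂ) : Prop :=
  ∃ (n : ℕ) (r : G →* Matrix.GeneralLinearGroup (Fin n) ℂ),
    Continuous r ∧ ∀ g, χ g = Matrix.trace (r g : Matrix (Fin n) (Fin n) ℂ)

/-- `χ : G → ℂ` is a faithful character of `G`: the trace of some injective continuous
finite-dimensional complex representation of `G`. -/
def IsFaithfulCharacter {G : Type*} [Group G] [TopologicalSpace G] (χ : G → ℂ) : Prop :=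
  ∃ (n : ℕ) (r : G →* Matrix.GeneralLinearGroup (Fin n) ℂ),
    Continuous r ∧ Function.Injective r ∧ ∀ g, χ g = Matrix.trace (r g : Matrix (Fin n) (Fin n) ℂ)

/-- A topological (Lie) group is faithfully representable if it admits an injective continuous
homomorphism into `GL(V)` for some finite-dimensional complex vector space `V`. -/
def FaithfullyRepresentable (G : Type*) [Group G] [TopologicalSpace G] : Prop :=
  ∃ (n : ℕ) (r : G →* Matrix.GeneralLinearGroup (Fin n) ℂ),
    Continuous r ∧ Function.Injective r

/-- The space `P` encoding `hom(K, G⋉M)`: pairs `(φ, y)` with `φ ∈ hom(K,G)` and `y` a point of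
`M` fixed by `φ(K)`. -/
def actPairs (K G M : Type*) [Group K] [TopologicalSpace K] [Group G] [TopologicalSpace G]
    [SMul G M] : Set (ContinuousMonoidHom K G × M) :=
  {p | ∀ k : K, p.1 k • p.2 = p.2}

/-- The relation on `P = actPairs K G M` generated by: being joined by a path inside `P`, and
being related by the `G`-action `g • (φ, y) = (c_g ∘ φ, g • y)`. -/
def actRel {K G M : Type*} [Group K] [TopologicalSpace K] [Group G] [TopologicalSpace G]
    [IsTopologicalGroup G] [SMul G M] [TopologicalSpace M]
    (p q : ContinuousMonoidHom K G × M) : Prop :=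
  JoinedIn (actPairs K G M) p q ∨ ∃ g : G, q = (conjCMH g p.1, g • p.2)

/-- `P(σ,x) = hom(K, G⋉M; σ̄(x))`: the smallest subset of `P` containing `(σ,x)` which is a union
of path-components of `P` and invariant under the `G`-action. -/
def actClass {K G M : Type*} [Group K] [TopologicalSpace K] [Group G] [TopologicalSpace G]
    [IsTopologicalGroup G] [SMul G M] [TopologicalSpace M]
    (σ : ContinuousMonoidHom K G) (x : M) : Set (ContinuousMonoidHom K G × M) :=
  {p | Relation.EqvGen actRel (σ, x) p}

/-- The monodromy group `Mon(G⋉M; σ̄(x)) ≤ Aut(K)` of the action groupoid. -/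
def MonAct {K G M : Type*} [Group K] [TopologicalSpace K] [Group G] [TopologicalSpace G]
    [IsTopologicalGroup G] [SMul G M] [TopologicalSpace M]
    (σ : ContinuousMonoidHom K G) (x : M) : Subgroup (contAut K) :=
  monOf (fun p μ => (precompCMH p.1 μ, p.2)) (fun p => by simp [precompCMH_one])
    (fun p μ ν => by simp [precompCMH_mul]) (actClass σ x)

/-- The setoid on `G × A` identifying `(g, y)` with `(g⬝h, h⁻¹⬝y)` for `h` in a subgroup `H`. -/
def cosetSetoid {G M : Type*} [Group G] [MulAction G M] (H : Subgroup G) (A : Set M) :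
    Setoid (G × A) where
  r p q := ∃ h ∈ H, q.1 = p.1 * h ∧ (q.2 : M) = h⁻¹ • (p.2 : M)
  iseqv := by
    constructor
    · exact fun p => ⟨1, H.one_mem, by simp, by simp⟩
    · rintro p q ⟨h, hH, h1, h2⟩
      refine ⟨h⁻¹, H.inv_mem hH, ?_, ?_⟩
      · rw [h1]; group
      · rw [h2]; simp [smul_smul]
    · rintro p q s ⟨h, hH, h1, h2⟩ ⟨h', hH', h1', h2'⟩
      refine ⟨h * h', H.mul_mem hH hH', ?_, ?_⟩
      · rw [h1', h1]; group
      · rw [h2', h2]; simp [smul_smul, mul_inv_rev]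


/-- Postcomposition of a continuous homomorphism with a (continuous) automorphism. -/
def postCMH {K G : Type*} [Group K] [TopologicalSpace K] [Group G]
    [TopologicalSpace G] (ν : contAut G) (φ : ContinuousMonoidHom K G) :
    ContinuousMonoidHom K G :=
  ⟨(ν : MulAut G).toMonoidHom.comp φ.toMonoidHom, ν.property.1.comp (map_continuous φ)⟩

/-!
For continuous representations `r₁, r₂` of a compact group with Haar probability measure `μ`,
`∫ χ₁ · conj χ₂ dμ` is the trace of the Haar average of `r₁ ⊗ conj r₂`. That average is an
idempotent matrix, so the integral is a natural number. Expanding, `∫ |χ - χ'|² dμ` is an integer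
for any two characters; it is positive when `χ ≠ χ'` and at most `‖χ - χ'‖∞²`. Hence the sup-norm
ball of radius `1` around a character contains no other character.
-/

open MeasureTheory ComplexConjugate

theorem Matrix.trace_eq_finrank_range_of_isIdempotentElem {ι F : Type*} [Fintype ι]
    [DecidableEq ι] [Field F] {P : Matrix ι ι F} (hP : IsIdempotentElem P) :
    P.trace = Module.finrank F (LinearMap.range P.toLin') := by
  rw [← Matrix.trace_toLin'_eq]
  exact (LinearMap.IsIdempotentElem.isProj_range _ (hP.map Matrix.toLinAlgEquiv')).trace

section HaarAverage

variable {K : Type*} [Group K] [TopologicalSpace K] [IsTopologicalGroup K] [CompactSpace K]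
  [MeasurableSpace K] [BorelSpace K] (μ : Measure K) [IsProbabilityMeasure μ]
  [μ.IsMulLeftInvariant]

theorem isIdempotentElem_integral_of_map_mul {A : Type*} [NormedRing A] [NormedAlgebra ℝ A]
    [CompleteSpace A] {s : K → A} (hs : Continuous s) (hmul : ∀ g h, s (g * h) = s g * s h) :
    IsIdempotentElem (∫ g, s g ∂μ) := by
  have hint : Integrable s μ := hs.integrable_of_hasCompactSupport (.of_compactSpace s)
  have hinv : ∀ g, s g * ∫ h, s h ∂μ = ∫ h, s h ∂μ := fun g => by
    rw [← integral_const_mul_of_integrable hint]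
    simp_rw [← hmul]
    exact integral_mul_left_eq_self s g
  calc (∫ g, s g ∂μ) * ∫ g, s g ∂μ = ∫ g, s g * ∫ h, s h ∂μ ∂μ :=
        (integral_mul_const_of_integrable hint).symm
    _ = ∫ g, s g ∂μ := by simp_rw [hinv]; simp

open scoped Matrix.Norms.L2Operator

theorem exists_integral_trace_eq_natCast {ι : Type*} [Fintype ι] [DecidableEq ι]
    {s : K → Matrix ι ι ℂ} (hs : Continuous s) (hmul : ∀ g h, s (g * h) = s g * s h) :
    ∃ m : ℕ, ∫ g, (s g).trace ∂μ = m := by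
  have hint : Integrable s μ := hs.integrable_of_hasCompactSupport (.of_compactSpace s)
  refine ⟨Module.finrank ℂ (LinearMap.range (∫ g, s g ∂μ).toLin'), ?_⟩
  rw [← Matrix.trace_eq_finrank_range_of_isIdempotentElem
    (isIdempotentElem_integral_of_map_mul μ hs hmul)]
  exact (Matrix.traceLinearMap ι ℂ ℂ).toContinuousLinearMap.integral_comp_comm hint

end HaarAverage

open scoped Kronecker in
theorem Continuous.matrix_kronecker {X R l m n p : Type*} [TopologicalSpace X]
    [TopologicalSpace R] [Mul R] [ContinuousMul R] {A : X → Matrix l m R} {B : X → Matrix n p R}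
    (hA : Continuous A) (hB : Continuous B) : Continuous fun x => A x ⊗ₖ B x :=
  continuous_matrix fun i j => (hA.matrix_elem i.1 j.1).mul (hB.matrix_elem i.2 j.2)

theorem IsCharacter.continuous {G : Type*} [Group G] [TopologicalSpace G] {χ : G → ℂ}
    (hχ : IsCharacter χ) : Continuous χ := by
  obtain ⟨n, r, hr, hχ⟩ := hχ
  rw [funext hχ]
  exact (Units.continuous_val.comp hr).matrix_trace

section Characters

variable {K : Type*} [Group K] [TopologicalSpace K] [IsTopologicalGroup K] [CompactSpace K]
  [MeasurableSpace K] [BorelSpace K] (μ : Measure K) [IsProbabilityMeasure μ]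
  [μ.IsMulLeftInvariant] {χ₁ χ₂ : K → ℂ}

open scoped Kronecker in
theorem IsCharacter.exists_integral_mul_conj_eq_natCast (h₁ : IsCharacter χ₁)
    (h₂ : IsCharacter χ₂) : ∃ m : ℕ, ∫ g, χ₁ g * conj (χ₂ g) ∂μ = m := by
  obtain ⟨n₁, r₁, hr₁, hχ₁⟩ := h₁
  obtain ⟨n₂, r₂, hr₂, hχ₂⟩ := h₂
  have hs : Continuous fun g =>
      (r₁ g : Matrix (Fin n₁) (Fin n₁) ℂ) ⊗ₖ (r₂ g : Matrix (Fin n₂) (Fin n₂) ℂ).map conj :=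
    (Units.continuous_val.comp hr₁).matrix_kronecker
      ((Units.continuous_val.comp hr₂).matrix_map Complex.continuous_conj)
  obtain ⟨m, hm⟩ := exists_integral_trace_eq_natCast μ hs fun g h => by
    simp only [map_mul, Units.val_mul, Matrix.map_mul, Matrix.mul_kronecker_mul]
  exact ⟨m, by simpa only [Matrix.trace_kronecker, ← AddMonoidHom.map_trace, ← hχ₁, ← hχ₂]
    using hm⟩

theorem IsCharacter.exists_integral_normSq_sub_eq_intCast (h₁ : IsCharacter χ₁)
    (h₂ : IsCharacter χ₂) : ∃ z : ℤ, ∫ g, Complex.normSq (χ₁ g - χ₂ g) ∂μ = z := by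
  have hint : ∀ {f₁ f₂ : K → ℂ}, IsCharacter f₁ → IsCharacter f₂ →
      Integrable (fun g => f₁ g * conj (f₂ g)) μ := fun hf₁ hf₂ =>
    (hf₁.continuous.mul (Complex.continuous_conj.comp hf₂.continuous))
      |>.integrable_of_hasCompactSupport
      (.of_compactSpace _)
  obtain ⟨m₁₁, e₁₁⟩ := h₁.exists_integral_mul_conj_eq_natCast μ h₁
  obtain ⟨m₁₂, e₁₂⟩ := h₁.exists_integral_mul_conj_eq_natCast μ h₂
  obtain ⟨m₂₁, e₂₁⟩ := h₂.exists_integral_mul_conj_eq_natCast μ h₁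
  obtain ⟨m₂₂, e₂₂⟩ := h₂.exists_integral_mul_conj_eq_natCast μ h₂
  refine ⟨m₁₁ - m₁₂ - (m₂₁ - m₂₂), Complex.ofReal_injective ?_⟩
  have hexpand : ∀ g, (Complex.normSq (χ₁ g - χ₂ g) : ℂ) =
      (χ₁ g * conj (χ₁ g) - χ₁ g * conj (χ₂ g)) - (χ₂ g * conj (χ₁ g) - χ₂ g * conj (χ₂ g)) :=
    fun g => by rw [← Complex.mul_conj, map_sub]; ring
  rw [← integral_complex_ofReal]
  simp_rw [hexpand]
  rw [integral_sub, integral_sub (hint h₁ h₁) (hint h₁ h₂),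
    integral_sub (hint h₂ h₁) (hint h₂ h₂), e₁₁, e₁₂, e₂₁, e₂₂]
  · push_cast
    ring
  · exact (hint h₁ h₁).sub (hint h₁ h₂)
  · exact (hint h₂ h₁).sub (hint h₂ h₂)

end Characters

namespace ContinuousMap

variable {X : Type*} [TopologicalSpace X] [CompactSpace X] [MeasurableSpace X]

theorem integral_normSq_sub_le_dist_sq (μ : Measure X) [IsProbabilityMeasure μ]
    (f g : C(X, ℂ)) : ∫ x, Complex.normSq (f x - g x) ∂μ ≤ dist f g ^ 2 := by
  calc ∫ x, Complex.normSq (f x - g x) ∂μ ≤ ∫ _, dist f g ^ 2 ∂μ :=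
        integral_mono_of_nonneg (.of_forall fun x => Complex.normSq_nonneg _)
          (integrable_const _) (.of_forall fun x => by
            show Complex.normSq (f x - g x) ≤ dist f g ^ 2
            rw [Complex.normSq_eq_norm_sq, ← dist_eq_norm]
            gcongr
            exact dist_apply_le_dist x)
    _ = dist f g ^ 2 := by simp

theorem integral_normSq_sub_pos [OpensMeasurableSpace X] (μ : Measure X) [IsFiniteMeasure μ]
    [μ.IsOpenPosMeasure] {f g : C(X, ℂ)} (hfg : f ≠ g) :
    0 < ∫ x, Complex.normSq (f x - g x) ∂μ := by
  obtain ⟨x, hx⟩ := DFunLike.ne_iff.mp hfg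
  have hcont : Continuous fun x => Complex.normSq (f x - g x) :=
    Complex.continuous_normSq.comp (map_continuous (f - g))
  exact hcont.integral_pos_of_hasCompactSupport_nonneg_nonzero (.of_compactSpace _)
    (fun x => Complex.normSq_nonneg _) (x := x) (by simpa [sub_eq_zero] using hx)

end ContinuousMap

theorem characters_discrete_general {K : Type*} [TopologicalSpace K] [Group K] [IsTopologicalGroup K]
    [CompactSpace K]
    (χ : C(K, ℂ)) (hχ : IsCharacter (χ : K → ℂ)) :
    ∃ U : Set C(K, ℂ), IsOpen U ∧ χ ∈ U ∧
      ∀ χ' ∈ U, IsCharacter ((χ' : C(K, ℂ)) : K → ℂ) → χ' = χ := by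
  borelize K
  let μ := Measure.haarMeasure (⊤ : TopologicalSpace.PositiveCompacts K)
  have : IsProbabilityMeasure μ := ⟨Measure.haarMeasure_self⟩
  refine ⟨Metric.ball χ 1, Metric.isOpen_ball, Metric.mem_ball_self one_pos,
    fun χ' hχ' hχ'_char => ?_⟩
  by_contra hne
  obtain ⟨z, hz⟩ := hχ'_char.exists_integral_normSq_sub_eq_intCast μ hχ
  have hpos : (0 : ℝ) < z := hz ▸ ContinuousMap.integral_normSq_sub_pos μ hne
  have hlt : (z : ℝ) < 1 := hz ▸ (ContinuousMap.integral_normSq_sub_le_dist_sq μ χ' χ).trans_lt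
    (pow_lt_one₀ dist_nonneg hχ' two_ne_zero)
  have : (0 : ℤ) < z ∧ z < 1 := ⟨by exact_mod_cast hpos, by exact_mod_cast hlt⟩
  omega

/-- characters of a compact Lie group form a discrete subspace of `C(K,ℂ)`. -/
theorem characters_discrete {dK : ℕ} {K : Type*} [TopologicalSpace K] [T2Space K]
    [ChartedSpace (EuclideanSpace ℝ (Fin dK)) K] [Group K] [IsTopologicalGroup K]
    [LieGroup (𝓡 dK) (⊤ : ℕ∞) K] [CompactSpace K]
    (χ : C(K, ℂ)) (hχ : IsCharacter (χ : K → ℂ)) :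
    ∃ U : Set C(K, ℂ), IsOpen U ∧ χ ∈ U ∧
      ∀ χ' ∈ U, IsCharacter ((χ' : C(K, ℂ)) : K → ℂ) → χ' = χ :=
  characters_discrete_general χ hχ

end Paper
end

section
/- Let K be a compact Lie group, G a Lie group, τ : G → ℂ a character of G, and ρ ∈ hom(K,G). Then for every φ ∈ hom(K,G;ρ) and every k ∈ K one has τ(φ(k)) = τ(ρ(k)). -/
open scoped Manifold

noncomputable section Paper

/-!
Let `τ = tr ∘ r` for a continuous representation `r : G → GL_n(ℂ)`. For `ψ, ψ₀ ∈ hom(K,G)`,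
averaging `r(ψ x) r(ψ₀ x)⁻¹` over the Haar probability measure of the compact group `K` gives a
matrix `F(ψ)` intertwining `r ∘ ψ₀` with `r ∘ ψ`. It depends continuously on `ψ` and
`F(ψ₀) = 1`, so `F(ψ)` is invertible for `ψ` near `ψ₀`, and then `r ∘ ψ` and `r ∘ ψ₀` are
conjugate. Hence `ψ ↦ τ ∘ ψ` is locally constant, so constant along paths; it is also invariant
under conjugation by `G`, hence constant on `hom(K,G;ρ)`.
-/
open MeasureTheory Topology Filter

theorem ContinuousMap.continuous_integral {K E : Type*} [TopologicalSpace K] [CompactSpace K]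
    [MeasurableSpace K] [BorelSpace K] [NormedAddCommGroup E] [NormedSpace ℝ E]
    [SecondCountableTopology E] (μ : Measure K) [IsFiniteMeasure μ] :
    Continuous fun f : C(K, E) => ∫ x, f x ∂μ :=
  (MeasureTheory.continuous_integral.comp (ContinuousMap.toLp 1 μ ℝ).continuous).congr fun f =>
    integral_congr_ae (ContinuousMap.coeFn_toLp μ f)

namespace ContinuousMonoidHom

variable {K A : Type*} [TopologicalSpace K] [Group K] [NormedRing A] [NormedAlgebra ℝ A]

section Averaging

variable [MeasurableSpace K] (μ : Measure K)

def averagedIntertwiner (α β : K →ₜ* A) : A := ∫ x, α x * β x⁻¹ ∂μ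

variable {μ}

theorem mul_averagedIntertwiner [IsTopologicalGroup K] [CompactSpace K] [BorelSpace K]
    [IsFiniteMeasure μ] [μ.IsMulLeftInvariant] (α β : K →ₜ* A) (y : K) :
    α y * averagedIntertwiner μ α β = averagedIntertwiner μ α β * β y := by
  have hint : Integrable (fun x => α x * β x⁻¹) μ :=
    Continuous.integrable_of_hasCompactSupport (by fun_prop) (.of_compactSpace _)
  calc α y * averagedIntertwiner μ α β = ∫ x, α (y * x) * β (y⁻¹ * (y * x))⁻¹ ∂μ := by
        rw [averagedIntertwiner, ← integral_const_mul_of_integrable hint]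
        simp only [map_mul, mul_assoc, inv_mul_cancel_left]
    _ = ∫ x, α x * β (y⁻¹ * x)⁻¹ ∂μ :=
        integral_mul_left_eq_self (fun x => α x * β (y⁻¹ * x)⁻¹) y
    _ = averagedIntertwiner μ α β * β y := by
        rw [averagedIntertwiner, ← integral_mul_const_of_integrable hint]
        simp only [mul_inv_rev, inv_inv, map_mul, mul_assoc]

theorem averagedIntertwiner_self [CompleteSpace A] [IsProbabilityMeasure μ] (α : K →ₜ* A) :
    averagedIntertwiner μ α α = 1 := by
  simp [averagedIntertwiner, ← map_mul]

theorem continuous_averagedIntertwiner_left [IsTopologicalGroup K] [CompactSpace K]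
    [BorelSpace K] [SecondCountableTopology A] [IsFiniteMeasure μ] (β : K →ₜ* A) :
    Continuous fun α : K →ₜ* A => averagedIntertwiner μ α β :=
  (ContinuousMap.continuous_integral μ).comp <| (continuous_mul_const
    (⟨fun x => β x⁻¹, by fun_prop⟩ : C(K, A))).comp (isInducing_toContinuousMap K A).continuous

end Averaging

theorem eventually_exists_units_conj [IsTopologicalGroup K] [CompactSpace K] [CompleteSpace A]
    [SecondCountableTopology A] (β : K →ₜ* A) :
    ∀ᶠ α in 𝓝 β, ∃ u : Aˣ, ∀ y, α y = u * β y * ↑u⁻¹ := by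
  borelize K
  let μ := Measure.haarMeasure (⊤ : TopologicalSpace.PositiveCompacts K)
  have : IsProbabilityMeasure μ :=
    ⟨by rw [← TopologicalSpace.PositiveCompacts.coe_top]; exact Measure.haarMeasure_self⟩
  have hβ : averagedIntertwiner μ β β ∈ {a : A | IsUnit a} := by
    simp [averagedIntertwiner_self]
  filter_upwards [(continuous_averagedIntertwiner_left β).continuousAt.preimage_mem_nhds
    (Units.isOpen.mem_nhds hβ)] with α ⟨u, hu⟩
  exact ⟨u, fun y => (Units.eq_mul_inv_iff_mul_eq u).mpr (hu ▸ mul_averagedIntertwiner α β y)⟩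

end ContinuousMonoidHom

theorem IsLocallyConstant.apply_eq_of_joined {X Y : Type*} [TopologicalSpace X] {f : X → Y}
    (hf : IsLocallyConstant f) {x y : X} (h : Joined x y) : f x = f y :=
  hf.apply_eq_of_isPreconnected isPreconnected_connectedComponent mem_connectedComponent
    (pathComponent_subset_component x h)

section Character

attribute [local instance] Matrix.linftyOpNormedRing Matrix.linftyOpNormedAlgebra

variable {G : Type*} [TopologicalSpace G] [Group G] {τ : G → ℂ}

theorem IsCharacter.apply_conj (hτ : IsCharacter τ) (g h : G) : τ (g * h * g⁻¹) = τ h := by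
  obtain ⟨n, r, -, hτr⟩ := hτ
  simp only [hτr, map_mul, map_inv, Units.val_mul, Matrix.trace_units_conj]

theorem IsCharacter.isLocallyConstant_comp {K : Type*} [TopologicalSpace K] [Group K]
    [IsTopologicalGroup K] [CompactSpace K] (hτ : IsCharacter τ) :
    IsLocallyConstant fun ψ : K →ₜ* G => fun k => τ (ψ k) := by
  obtain ⟨n, r, hr, hτr⟩ := hτ
  have : SecondCountableTopology (Matrix (Fin n) (Fin n) ℂ) := secondCountable_of_proper
  let R : G →ₜ* Matrix (Fin n) (Fin n) ℂ :=
    ⟨(Units.coeHom _).comp r, Units.continuous_val.comp hr⟩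
  refine (IsLocallyConstant.iff_eventually_eq _).mpr fun ψ₀ => ?_
  filter_upwards [(ContinuousMonoidHom.continuous_comp_right R).continuousAt.eventually
    (ContinuousMonoidHom.eventually_exists_units_conj (R.comp ψ₀))] with ψ ⟨u, hu⟩
  funext k
  simp only [hτr]
  exact (congrArg Matrix.trace (hu k)).trans (Matrix.trace_units_conj u _)

end Character

theorem character_constant_on_homClass_general {K : Type*} [TopologicalSpace K]
    [Group K] [IsTopologicalGroup K] [CompactSpace K]
    {G : Type*} [TopologicalSpace G] [Group G] [IsTopologicalGroup G]
    (τ : G → ℂ) (hτ : IsCharacter τ) (ρ : ContinuousMonoidHom K G)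
    (φ : ContinuousMonoidHom K G) (hφ : φ ∈ homClass ρ) (k : K) :
    τ (φ k) = τ (ρ k) := by
  have hrel : ∀ ψ ψ' : K →ₜ* G, homRel ψ ψ' → (fun k => τ (ψ k)) = fun k => τ (ψ' k) := by
    rintro ψ ψ' (hjoined | ⟨g, rfl⟩)
    · exact hτ.isLocallyConstant_comp.apply_eq_of_joined hjoined
    · exact funext fun k => (hτ.apply_conj g (ψ k)).symm
  have hclass := (Equivalence.eqvGen_iff
    (Setoid.ker fun ψ : K →ₜ* G => fun k => τ (ψ k)).iseqv).mp (Relation.EqvGen.mono hrel _ _ hφ)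
  exact (congrFun hclass k).symm

/-- a character of a Lie group `G` is constant on `hom(K,G;ρ)` evaluated at any
element of a compact Lie group `K`. -/
theorem character_constant_on_homClass {dK : ℕ} {K : Type*} [TopologicalSpace K] [T2Space K]
    [ChartedSpace (EuclideanSpace ℝ (Fin dK)) K] [Group K] [IsTopologicalGroup K]
    [LieGroup (𝓡 dK) (⊤ : ℕ∞) K] [CompactSpace K]
    {dG : ℕ} {G : Type*} [TopologicalSpace G] [T2Space G]
    [ChartedSpace (EuclideanSpace ℝ (Fin dG)) G] [Group G] [IsTopologicalGroup G]
    [LieGroup (𝓡 dG) (⊤ : ℕ∞) G]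
    (τ : G → ℂ) (hτ : IsCharacter τ) (ρ : ContinuousMonoidHom K G)
    (φ : ContinuousMonoidHom K G) (hφ : φ ∈ homClass ρ) (k : K) :
    τ (φ k) = τ (ρ k) :=
  character_constant_on_homClass_general τ hτ ρ φ hφ k

end Paper
end

section
/- Let G be a faithfully representable Lie group, K a compact Lie group, and ρ ∈ hom(K,G) an injective continuous homomorphism. Then every φ ∈ hom(K,G;ρ) is injective. -/
open scoped Manifold

noncomputable section Paper

/-!
A faithfully representable group has no small subgroups, because `GL_n(ℂ)` has none: if
`‖x ^ m - 1‖ ≤ ε < 1` for all `m`, the identity `(1 + x + ⋯ + x ^ (N - 1)) (x - 1) = x ^ N - 1`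
gives `N ‖x - 1‖ ≤ N ε ‖x - 1‖ + ε` for every `N`, so `x = 1`.

For compact `K` and `G` without small subgroups, each set `{φ | φ k = 1}` is clopen in
`hom(K,G)`: if `φ` kills `k` it kills the compact set `closure ⟨k⟩`, homomorphisms close to `φ`
map this set into a neighbourhood of `1` containing no nontrivial subgroup, hence kill `k` too.
So the kernel is constant along paths, and obviously under conjugation, hence on `hom(K,G;ρ)`.
-/

open Topology

theorem IsClopen.mem_iff_of_joined {X : Type*} [TopologicalSpace X] {s : Set X}
    (hs : IsClopen s) {x y : X} (h : Joined x y) : x ∈ s ↔ y ∈ s :=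
  ⟨fun hx => hs.connectedComponent_subset hx (pathComponent_subset_component x h),
    fun hy => hs.connectedComponent_subset hy (pathComponent_subset_component y h.symm)⟩

def NoSmallSubgroups (G : Type*) [Group G] [TopologicalSpace G] : Prop :=
  ∃ V ∈ 𝓝 (1 : G), ∀ H : Subgroup G, (H : Set G) ⊆ V → H = ⊥

theorem eq_one_of_forall_norm_pow_sub_one_le {A : Type*} [NormedRing A] [NormedSpace ℝ A]
    {x : A} {ε : ℝ} (hε : ε < 1) (hx : ∀ m : ℕ, ‖x ^ m - 1‖ ≤ ε) : x = 1 := by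
  set y := x - 1
  have hbound (N : ℕ) : (N : ℝ) * ‖y‖ ≤ N * ε * ‖y‖ + ε := by
    have hsum : N • y = ∑ m ∈ Finset.range N, (1 - x ^ m) * y + (x ^ N - 1) := by
      rw [← geom_sum_mul, ← Finset.sum_mul, ← add_mul, ← Finset.sum_add_distrib]
      simp
    calc (N : ℝ) * ‖y‖ = ‖N • y‖ := by rw [RCLike.norm_nsmul ℝ, nsmul_eq_mul]
      _ ≤ ∑ m ∈ Finset.range N, ‖(1 - x ^ m) * y‖ + ‖x ^ N - 1‖ := by
        rw [hsum]
        exact (norm_add_le _ _).trans (by gcongr; exact norm_sum_le _ _)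
      _ ≤ ∑ m ∈ Finset.range N, ε * ‖y‖ + ε := by
        gcongr with m
        · exact (norm_mul_le _ _).trans
            (mul_le_mul_of_nonneg_right (norm_sub_rev (1 : A) _ ▸ hx m) (norm_nonneg _))
        · exact hx N
      _ = N * ε * ‖y‖ + ε := by simp [mul_assoc]
  by_contra hne
  have hy : 0 < (1 - ε) * ‖y‖ := mul_pos (by linarith) (norm_pos_iff.2 (sub_ne_zero.2 hne))
  obtain ⟨N, hN⟩ := exists_nat_gt (ε / ((1 - ε) * ‖y‖))
  rw [div_lt_iff₀ hy] at hN
  linarith [hbound N]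

theorem noSmallSubgroups_units (A : Type*) [NormedRing A] [NormedSpace ℝ A] :
    NoSmallSubgroups Aˣ := by
  refine ⟨{u | ‖(u : A) - 1‖ < 1 / 2}, ?_, fun H hH => ?_⟩
  · exact (isOpen_lt (by fun_prop) continuous_const).mem_nhds (by simp)
  · refine (Subgroup.eq_bot_iff_forall H).2 fun u hu => Units.ext ?_
    exact eq_one_of_forall_norm_pow_sub_one_le (ε := 1 / 2) (by norm_num)
      fun m => (hH (H.pow_mem hu m)).le

theorem NoSmallSubgroups.of_injective {G H : Type*} [Group G] [TopologicalSpace G] [Group H]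
    [TopologicalSpace H] (hH : NoSmallSubgroups H) {f : G →* H} (hf : Continuous f)
    (hinj : Function.Injective f) : NoSmallSubgroups G := by
  obtain ⟨V, hV, hVH⟩ := hH
  refine ⟨f ⁻¹' V, hf.continuousAt.preimage_mem_nhds (by rwa [map_one]), fun S hS => ?_⟩
  rw [← Subgroup.map_eq_bot_iff_of_injective S hinj]
  exact hVH _ (by rintro _ ⟨s, hs, rfl⟩; exact hS hs)

-- Any submultiplicative norm on matrices inducing the product topology would do here.
attribute [local instance] Matrix.linftyOpNormedRing Matrix.linftyOpNormedSpace in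
theorem FaithfullyRepresentable.noSmallSubgroups {G : Type*} [Group G] [TopologicalSpace G]
    (hG : FaithfullyRepresentable G) : NoSmallSubgroups G := by
  obtain ⟨n, r, hr, hinj⟩ := hG
  exact (noSmallSubgroups_units (Matrix (Fin n) (Fin n) ℂ)).of_injective hr hinj

section Kernel

variable {K G : Type*} [Group K] [TopologicalSpace K] [CompactSpace K]
  [Group G] [TopologicalSpace G] [T1Space G]

theorem isClopen_setOf_map_eq_one (hG : NoSmallSubgroups G) (k : K) :
    IsClopen {φ : ContinuousMonoidHom K G | φ k = 1} := by
  refine ⟨isClosed_singleton.preimage (continuous_eval_const k), isOpen_iff_mem_nhds.2 ?_⟩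
  intro φ (hφ : φ k = 1)
  obtain ⟨V, hV, hVG⟩ := hG
  set A := closure (Subgroup.zpowers k : Set K)
  have hAker : A ⊆ φ ⁻¹' {1} :=
    closure_minimal (by rintro _ ⟨m, rfl⟩; simp [hφ]) (isClosed_singleton.preimage φ.continuous)
  have hφA : Set.MapsTo φ A (interior V) := fun a ha => by
    rw [hAker ha]
    exact mem_interior_iff_mem_nhds.2 hV
  have hW : IsOpen {ψ : ContinuousMonoidHom K G | Set.MapsTo ψ A (interior V)} :=
    (ContinuousMap.isOpen_setOfPred_mapsTo isClosed_closure.isCompact isOpen_interior).preimage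
      (ContinuousMonoidHom.isInducing_toContinuousMap K G).continuous
  filter_upwards [hW.mem_nhds hφA] with ψ hψ
  have hbot : (Subgroup.zpowers k).map (ψ : K →* G) = ⊥ :=
    hVG _ (by rintro _ ⟨a, ha, rfl⟩; exact interior_subset (hψ (subset_closure ha)))
  exact Subgroup.mem_bot.1 (hbot ▸ Subgroup.mem_map_of_mem _ (Subgroup.mem_zpowers k))

variable [IsTopologicalGroup G]

theorem homRel.map_eq_one_iff (hG : NoSmallSubgroups G)
    {φ ψ : ContinuousMonoidHom K G} (h : homRel φ ψ) (k : K) : φ k = 1 ↔ ψ k = 1 := by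
  rcases h with hjoin | ⟨g, rfl⟩
  · exact (isClopen_setOf_map_eq_one hG k).mem_iff_of_joined hjoin
  · exact conj_eq_one_iff.symm

theorem ker_eq_of_mem_homClass (hG : NoSmallSubgroups G)
    {ρ φ : ContinuousMonoidHom K G} (hφ : φ ∈ homClass ρ) :
    (φ : K →* G).ker = (ρ : K →* G).ker := by
  ext k
  induction hφ with
  | rel _ _ h => exact (h.map_eq_one_iff hG k).symm
  | refl => rfl
  | symm _ _ _ ih => exact ih.symm
  | trans _ _ _ _ _ ih₁ ih₂ => exact ih₂.trans ih₁

end Kernel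

theorem injective_on_homClass_general {K : Type*} [TopologicalSpace K]
    [Group K] [CompactSpace K]
    {G : Type*} [TopologicalSpace G] [T2Space G]
    [Group G] [IsTopologicalGroup G]
    (hG : FaithfullyRepresentable G)
    (ρ : ContinuousMonoidHom K G) (hρ : Function.Injective ρ)
    (φ : ContinuousMonoidHom K G) (hφ : φ ∈ homClass ρ) :
    Function.Injective φ := by
  have hker := ker_eq_of_mem_homClass hG.noSmallSubgroups hφ
  exact (MonoidHom.ker_eq_bot_iff (φ : K →* G)).1
    (hker.trans ((MonoidHom.ker_eq_bot_iff (ρ : K →* G)).2 hρ))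

/-- in a faithfully representable Lie group, every member of `hom(K,G;ρ)` with
`ρ` injective is injective. -/
theorem injective_on_homClass {dK : ℕ} {K : Type*} [TopologicalSpace K] [T2Space K]
    [ChartedSpace (EuclideanSpace ℝ (Fin dK)) K] [Group K] [IsTopologicalGroup K]
    [LieGroup (𝓡 dK) (⊤ : ℕ∞) K] [CompactSpace K]
    {dG : ℕ} {G : Type*} [TopologicalSpace G] [T2Space G]
    [ChartedSpace (EuclideanSpace ℝ (Fin dG)) G] [Group G] [IsTopologicalGroup G]
    [LieGroup (𝓡 dG) (⊤ : ℕ∞) G]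
    (hG : FaithfullyRepresentable G)
    (ρ : ContinuousMonoidHom K G) (hρ : Function.Injective ρ)
    (φ : ContinuousMonoidHom K G) (hφ : φ ∈ homClass ρ) :
    Function.Injective φ :=
  injective_on_homClass_general hG ρ hρ φ hφ

end Paper
end

section
/- Let G be a faithfully representable Lie group, K a compact Lie group, and ρ ∈ hom(K,G) an injective continuous homomorphism. Then there exists a faithful character χ of K such that χ∘μ = χ for every μ ∈ Mon(G;ρ). -/
/-!
Take `χ = tr ∘ r ∘ ρ` for a faithful representation `r` of `G`. A monodromy automorphism `μ`
sends `ρ` to `ρ ∘ μ ∈ hom(K,G;ρ)`, so it suffices that `tr ∘ r ∘ φ` does not change under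
conjugating `φ` (the trace is conjugation invariant) nor along a path `φₜ`. For the latter, put
`χₜ = tr ∘ r ∘ φₜ`: the Haar average of `r φₛ ⊗ conj (r φₜ)` is an idempotent matrix, so
`∫ χₛ conj χₜ` is a natural number depending continuously on `(s, t)`, hence constant, and then
`∫ |χₛ - χₜ|² = 0`.
-/

open scoped Manifold

noncomputable section Paper

open MeasureTheory
open scoped Kronecker ComplexConjugate

theorem Matrix.trace_eq_finrank_range_toLin'_of_isIdempotentElem {n K : Type*} [Fintype n]
    [DecidableEq n] [Field K] {P : Matrix n n K} (hP : IsIdempotentElem P) :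
    P.trace = Module.finrank K (LinearMap.range P.toLin') := by
  have hP' : IsIdempotentElem P.toLin' := hP.map Matrix.toLinAlgEquiv'
  rw [← Matrix.trace_toLin'_eq, ((LinearMap.isProj_range_iff_isIdempotentElem _).2 hP').trace]

namespace Matrix

variable {K m n 𝕜 : Type*} [MeasurableSpace K] [RCLike 𝕜]

/-- Bochner integral taken entry by entry, as `Matrix` carries no global norm instance. -/
def entrywiseIntegral (μ : Measure K) (R : K → Matrix m n 𝕜) : Matrix m n 𝕜 :=
  of fun i j => ∫ k, R k i j ∂μ

theorem trace_entrywiseIntegral [Fintype n] (μ : Measure K) (R : K → Matrix n n 𝕜)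
    (hR : ∀ i, Integrable (fun k => R k i i) μ) :
    (entrywiseIntegral μ R).trace = ∫ k, (R k).trace ∂μ := by
  simp only [trace, diag, entrywiseIntegral, of_apply]
  exact (integral_finsetSum _ fun i _ => hR i).symm

variable [Group K] [MeasurableMul K] (μ : Measure K) [μ.IsMulLeftInvariant] [Fintype n]
  [DecidableEq n]

theorem mul_entrywiseIntegral_monoidHom (R : K →* Matrix n n 𝕜)
    (hR : ∀ i j, Integrable (fun k => R k i j) μ) (y : K) :
    R y * entrywiseIntegral μ R = entrywiseIntegral μ R := by
  ext i j
  calc (R y * entrywiseIntegral μ R) i j = ∫ k, (R y * R k) i j ∂μ := by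
        simp only [mul_apply, entrywiseIntegral, of_apply, ← integral_const_mul]
        exact (integral_finsetSum _ fun l _ => (hR l j).const_mul _).symm
    _ = ∫ k, R k i j ∂μ := by
        simp_rw [← map_mul]
        exact integral_mul_left_eq_self (fun k => R k i j) y

theorem isIdempotentElem_entrywiseIntegral_monoidHom [IsProbabilityMeasure μ]
    (R : K →* Matrix n n 𝕜) (hR : ∀ i j, Integrable (fun k => R k i j) μ) :
    IsIdempotentElem (entrywiseIntegral μ R) := by
  ext i j
  calc (entrywiseIntegral μ R * entrywiseIntegral μ R) i j
      = ∫ k, (R k * entrywiseIntegral μ R) i j ∂μ := by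
        simp only [mul_apply, entrywiseIntegral, of_apply, ← integral_mul_const]
        exact (integral_finsetSum _ fun l _ => (hR i l).mul_const _).symm
    _ = entrywiseIntegral μ R i j := by simp [mul_entrywiseIntegral_monoidHom μ R hR]

end Matrix

namespace MonoidHom

variable {K n : Type*} [Monoid K] [Fintype n] [DecidableEq n]

def kroneckerConj (F G : K →* Matrix n n ℂ) : K →* Matrix (n × n) (n × n) ℂ where
  toFun k := F k ⊗ₖ (G k).map conj
  map_one' := by simp
  map_mul' k l := by simp [Matrix.map_mul, Matrix.mul_kronecker_mul]

theorem trace_kroneckerConj (F G : K →* Matrix n n ℂ) (k : K) :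
    (kroneckerConj F G k).trace = (F k).trace * conj (G k).trace := by
  rw [AddMonoidHom.map_trace]
  exact Matrix.trace_kronecker _ _

theorem continuous_kroneckerConj [TopologicalSpace K] {F G : K →* Matrix n n ℂ}
    (hF : Continuous F) (hG : Continuous G) : Continuous (kroneckerConj F G) :=
  continuous_matrix fun i j => (hF.matrix_elem i.1 j.1).mul (hG.matrix_elem i.2 j.2).star

end MonoidHom

theorem exists_isHaarMeasure_isProbabilityMeasure (K : Type*) [Group K] [TopologicalSpace K]
    [IsTopologicalGroup K] [CompactSpace K] [MeasurableSpace K] [BorelSpace K] :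
    ∃ μ : Measure K, μ.IsHaarMeasure ∧ IsProbabilityMeasure μ := by
  have : Nonempty K := ⟨1⟩
  refine ⟨Measure.haarMeasure ⊤, inferInstance, ⟨?_⟩⟩
  rw [← TopologicalSpace.PositiveCompacts.coe_top (α := K)]
  exact Measure.haarMeasure_self

theorem Continuous.eq_zero_of_integral_mul_conj_eq_zero {K : Type*} [TopologicalSpace K]
    [CompactSpace K] [MeasurableSpace K] [OpensMeasurableSpace K] {μ : Measure K}
    [IsFiniteMeasure μ] [μ.IsOpenPosMeasure] {f : K → ℂ} (hf : Continuous f)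
    (h : ∫ k, f k * conj (f k) ∂μ = 0) : f = 0 := by
  simp_rw [Complex.mul_conj, integral_complex_ofReal, Complex.ofReal_eq_zero] at h
  funext k
  by_contra hk
  refine (Continuous.integral_pos_of_hasCompactSupport_nonneg_nonzero
    (Complex.continuous_normSq.comp hf) (HasCompactSupport.of_compactSpace _)
    (fun _ => Complex.normSq_nonneg _) (Complex.normSq_eq_zero.not.2 hk)).ne' h

theorem PreconnectedSpace.constant_of_forall_natCast {X : Type*} [TopologicalSpace X]
    [PreconnectedSpace X] {f : X → ℂ} (hf : Continuous f) (hnat : ∀ x, ∃ m : ℕ, f x = m)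
    (a b : X) : f a = f b := by
  choose g hg using hnat
  have hcast : Topology.IsEmbedding ((↑) : ℕ → ℂ) := by
    simpa [Function.comp_def] using
      Complex.isometry_ofReal.isEmbedding.comp Nat.isClosedEmbedding_coe_real.isEmbedding
  have hgc : Continuous g := hcast.continuous_iff.2 <| by
    simpa [Function.comp_def, ← hg] using hf
  rw [hg a, hg b, PreconnectedSpace.constant inferInstance hgc]

theorem exists_integral_trace_mul_conj_trace_eq_natCast {K n : Type*} [Group K]
    [TopologicalSpace K] [IsTopologicalGroup K] [CompactSpace K] [MeasurableSpace K]
    [BorelSpace K] [Fintype n] [DecidableEq n] (μ : Measure K) [IsProbabilityMeasure μ]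
    [μ.IsMulLeftInvariant] {F G : K →* Matrix n n ℂ} (hF : Continuous F) (hG : Continuous G) :
    ∃ m : ℕ, ∫ k, (F k).trace * conj (G k).trace ∂μ = m := by
  set R := F.kroneckerConj G
  have hR : ∀ i j, Integrable (fun k => R k i j) μ := fun i j =>
    ((MonoidHom.continuous_kroneckerConj hF hG).matrix_elem i j).integrable_of_hasCompactSupport
      (HasCompactSupport.of_compactSpace _)
  have hP := Matrix.trace_eq_finrank_range_toLin'_of_isIdempotentElem
    (Matrix.isIdempotentElem_entrywiseIntegral_monoidHom μ R hR)
  rw [Matrix.trace_entrywiseIntegral μ R fun i => hR i i] at hP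
  simp_rw [R, MonoidHom.trace_kroneckerConj] at hP
  exact ⟨_, hP⟩

theorem trace_eq_of_continuous_family {X K n : Type*} [TopologicalSpace X] [PreconnectedSpace X]
    [LocallyCompactSpace X] [FirstCountableTopology X] [Group K] [TopologicalSpace K]
    [IsTopologicalGroup K] [CompactSpace K] [Fintype n] [DecidableEq n]
    (F : X → K →* Matrix n n ℂ) (hF : Continuous fun p : X × K => F p.1 p.2) (x y : X) (k : K) :
    (F x k).trace = (F y k).trace := by
  borelize K
  obtain ⟨μ, _, _⟩ := exists_isHaarMeasure_isProbabilityMeasure K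
  set χ : X → K → ℂ := fun x k => (F x k).trace
  have hχ : Continuous fun p : X × K => χ p.1 p.2 := hF.matrix_trace
  have hFx : ∀ x, Continuous (F x) := fun x => hF.comp (continuous_const.prodMk continuous_id)
  have hχx : ∀ x, Continuous (χ x) := fun x => hχ.comp (continuous_const.prodMk continuous_id)
  set J : X × X → ℂ := fun p => ∫ k, χ p.1 k * conj (χ p.2 k) ∂μ
  have hJ_cont : Continuous J := by
    simpa using continuous_parametric_integral_of_continuous (μ := μ)
      (f := fun (p : X × X) k => χ p.1 k * conj (χ p.2 k)) (by fun_prop) isCompact_univ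
  have hJ_const := PreconnectedSpace.constant_of_forall_natCast hJ_cont
    fun p => exists_integral_trace_mul_conj_trace_eq_natCast μ (hFx p.1) (hFx p.2)
  have hint : ∀ x y, Integrable (fun k => χ x k * conj (χ y k)) μ := fun x y =>
    ((hχx x).mul (hχx y).star).integrable_of_hasCompactSupport
      (HasCompactSupport.of_compactSpace _)
  have hzero : ∫ k, (χ x k - χ y k) * conj (χ x k - χ y k) ∂μ = 0 := by
    calc _ = J (x, x) - J (y, x) - (J (x, y) - J (y, y)) := by
          have hx : Integrable (fun k => χ x k * conj (χ x k) - χ y k * conj (χ x k)) μ :=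
            (hint x x).sub (hint y x)
          have hy : Integrable (fun k => χ x k * conj (χ y k) - χ y k * conj (χ y k)) μ :=
            (hint x y).sub (hint y y)
          simp only [map_sub, mul_sub, sub_mul]
          rw [integral_sub hx hy,
            integral_sub (hint x x) (hint y x), integral_sub (hint x y) (hint y y)]
      _ = 0 := by
          rw [hJ_const (y, x) (x, x), hJ_const (x, y) (x, x), hJ_const (y, y) (x, x)]
          ring
  have hχ_eq := ((hχx x).sub (hχx y)).eq_zero_of_integral_mul_conj_eq_zero hzero
  exact sub_eq_zero.1 (congrFun hχ_eq k)

theorem trace_conjCMH {K G : Type*} [Group K] [TopologicalSpace K] [Group G] [TopologicalSpace G]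
    [IsTopologicalGroup G] {n : Type*} [Fintype n] [DecidableEq n]
    (r : G →* GL n ℂ) (g : G) (φ : ContinuousMonoidHom K G) (k : K) :
    (r (conjCMH g φ k) : Matrix n n ℂ).trace = (r (φ k) : Matrix n n ℂ).trace := by
  show (r (g * φ k * g⁻¹) : Matrix n n ℂ).trace = _
  rw [map_mul, map_mul, map_inv, Units.val_mul, Units.val_mul, Matrix.trace_units_conj]

theorem trace_comp_eq_of_joined {K G : Type*} [Group K] [TopologicalSpace K]
    [IsTopologicalGroup K] [CompactSpace K] [Group G] [TopologicalSpace G]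
    {n : Type*} [Fintype n] [DecidableEq n] (r : G →* GL n ℂ) (hr : Continuous r)
    {φ ψ : ContinuousMonoidHom K G} (h : Joined φ ψ) (k : K) :
    (r (φ k) : Matrix n n ℂ).trace = (r (ψ k) : Matrix n n ℂ).trace := by
  let γ := h.somePath
  have hγ : Continuous fun p : unitInterval × K => γ p.1 p.2 :=
    (γ.continuous.comp continuous_fst).eval continuous_snd
  simpa using trace_eq_of_continuous_family
    (fun t => (Units.coeHom _).comp (r.comp (γ t).toMonoidHom))
    (Units.continuous_val.comp (hr.comp hγ)) 0 1 k

theorem trace_comp_eq_of_eqvGen_homRel {K G : Type*} [Group K] [TopologicalSpace K]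
    [IsTopologicalGroup K] [CompactSpace K] [Group G] [TopologicalSpace G] [IsTopologicalGroup G]
    {n : Type*} [Fintype n] [DecidableEq n] (r : G →* GL n ℂ) (hr : Continuous r)
    {φ ψ : ContinuousMonoidHom K G} (h : Relation.EqvGen homRel φ ψ) (k : K) :
    (r (φ k) : Matrix n n ℂ).trace = (r (ψ k) : Matrix n n ℂ).trace := by
  induction h with
  | rel φ ψ hrel =>
    rcases hrel with hjoined | ⟨g, rfl⟩
    · exact trace_comp_eq_of_joined r hr hjoined k
    · exact (trace_conjCMH r g φ k).symm
  | refl => rfl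
  | symm _ _ _ ih => exact ih.symm
  | trans _ _ _ _ _ ih₁ ih₂ => exact ih₁.trans ih₂

theorem faithful_character_monodromy_invariant_general {K : Type*} [TopologicalSpace K]
    [Group K] [IsTopologicalGroup K] [CompactSpace K]
    {G : Type*} [TopologicalSpace G] [Group G] [IsTopologicalGroup G]
    (hG : FaithfullyRepresentable G)
    (ρ : ContinuousMonoidHom K G) (hρ : Function.Injective ρ) :
    ∃ χ : K → ℂ, IsFaithfulCharacter χ ∧
      ∀ μ ∈ Mon ρ, ∀ k : K, χ ((μ : MulAut K) k) = χ k := by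
  obtain ⟨n, r, hr_cont, hr_inj⟩ := hG
  refine ⟨fun k => (r (ρ k) : Matrix (Fin n) (Fin n) ℂ).trace,
    ⟨n, r.comp ρ.toMonoidHom, hr_cont.comp ρ.continuous, hr_inj.comp hρ, fun _ => rfl⟩, ?_⟩
  intro μ hμ k
  have hρμ : precompCMH ρ μ ∈ homClass ρ :=
    (mem_Mon_iff ρ μ).1 hμ ▸ ⟨ρ, Relation.EqvGen.refl ρ, rfl⟩
  exact (trace_comp_eq_of_eqvGen_homRel r hr_cont hρμ k).symm

/-- obstruction to faithful representability via the monodromy group: there is a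
faithful character of `K` invariant under all monodromy automorphisms. -/
theorem faithful_character_monodromy_invariant {dK : ℕ} {K : Type*} [TopologicalSpace K] [T2Space K]
    [ChartedSpace (EuclideanSpace ℝ (Fin dK)) K] [Group K] [IsTopologicalGroup K]
    [LieGroup (𝓡 dK) (⊤ : ℕ∞) K] [CompactSpace K]
    {dG : ℕ} {G : Type*} [TopologicalSpace G] [T2Space G]
    [ChartedSpace (EuclideanSpace ℝ (Fin dG)) G] [Group G] [IsTopologicalGroup G]
    [LieGroup (𝓡 dG) (⊤ : ℕ∞) G]
    (hG : FaithfullyRepresentable G)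
    (ρ : ContinuousMonoidHom K G) (hρ : Function.Injective ρ) :
    ∃ χ : K → ℂ, IsFaithfulCharacter χ ∧
      ∀ μ ∈ Mon ρ, ∀ k : K, χ ((μ : MulAut K) k) = χ k :=
  faithful_character_monodromy_invariant_general hG ρ hρ

end Paper
end

section
/- Let K be a locally compact Hausdorff topological group, G a topological group, and ρ ∈ hom(K,G). Then the group Inn(K) of inner automorphisms of K is a normal subgroup of the monodromy group Mon(G;ρ). -/
open scoped Manifold

noncomputable section Paper

/-! Precomposing `φ` with `c_k` gives the conjugate of `φ` by `φ k`, so inner automorphisms preserve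
every class `hom(K,G;ρ)`. Since `μ ∘ c_k ∘ μ⁻¹ = c_{μ k}`, `Inn(K)` is normal in all of `Aut(K)`,
hence in `Mon(G;ρ)`. -/

theorem MulAut.mul_conj_mul_inv {K : Type*} [Group K] (μ : MulAut K) (k : K) :
    μ * MulAut.conj k * μ⁻¹ = MulAut.conj (μ k) := by
  ext a
  simp only [MulAut.mul_apply, MulAut.conj_apply, map_mul, map_inv, MulAut.apply_inv_self]

theorem innAut_normal (K : Type*) [Group K] [TopologicalSpace K] : (innAut K).Normal where
  conj_mem := by
    rintro μ ⟨k, hk⟩ ν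
    exact ⟨(ν : MulAut K) k, by
      rw [Subgroup.coe_mul, Subgroup.coe_mul, Subgroup.coe_inv, hk, MulAut.mul_conj_mul_inv]⟩

theorem le_monOf_of_mapsTo {K X : Type*} [Group K] [TopologicalSpace K]
    {act : X → contAut K → X} {hone : ∀ x, act x 1 = x}
    {hmul : ∀ x μ ν, act x (μ * ν) = act (act x μ) ν} {S : Set X} {H : Subgroup (contAut K)}
    (hH : ∀ μ ∈ H, Set.MapsTo (fun x => act x μ) S S) :
    H ≤ monOf act hone hmul S := by
  intro μ hμ
  refine (hH μ hμ).image_subset.antisymm fun x hx => ⟨act x μ⁻¹, hH _ (H.inv_mem hμ) hx, ?_⟩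
  simp only [← hmul, inv_mul_cancel, hone]

theorem precompCMH_eq_conjCMH {K G : Type*} [Group K] [TopologicalSpace K] [Group G]
    [TopologicalSpace G] [IsTopologicalGroup G] (φ : ContinuousMonoidHom K G)
    {μ : contAut K} {k : K} (hk : (μ : MulAut K) = MulAut.conj k) :
    precompCMH φ μ = conjCMH (φ k) φ := by
  ext a
  show φ ((μ : MulAut K) a) = φ k * φ a * (φ k)⁻¹
  rw [hk, MulAut.conj_apply, map_mul, map_mul, map_inv]

theorem precompCMH_mem_homClass_of_mem_innAut {K G : Type*} [Group K] [TopologicalSpace K]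
    [Group G] [TopologicalSpace G] [IsTopologicalGroup G] {ρ φ : ContinuousMonoidHom K G}
    (hφ : φ ∈ homClass ρ) {μ : contAut K} (hμ : μ ∈ innAut K) :
    precompCMH φ μ ∈ homClass ρ := by
  obtain ⟨k, hk⟩ := hμ
  exact hφ.trans _ _ _ (.rel _ _ (Or.inr ⟨φ k, precompCMH_eq_conjCMH φ hk⟩))

theorem innAut_normal_in_Mon_general {K : Type*} [Group K] [TopologicalSpace K]
    {G : Type*} [Group G] [TopologicalSpace G] [IsTopologicalGroup G]
    (ρ : ContinuousMonoidHom K G) :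
    innAut K ≤ Mon ρ ∧ ((innAut K).subgroupOf (Mon ρ)).Normal :=
  ⟨le_monOf_of_mapsTo fun _ hμ _ hφ => precompCMH_mem_homClass_of_mem_innAut hφ hμ,
    (innAut_normal K).subgroupOf _⟩

/-- the inner automorphisms form a normal subgroup of the monodromy group. -/
theorem innAut_normal_in_Mon {K : Type*} [Group K] [TopologicalSpace K] [IsTopologicalGroup K]
    [LocallyCompactSpace K] [T2Space K]
    {G : Type*} [Group G] [TopologicalSpace G] [IsTopologicalGroup G]
    (ρ : ContinuousMonoidHom K G) :
    innAut K ≤ Mon ρ ∧ ((innAut K).subgroupOf (Mon ρ)).Normal :=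
  innAut_normal_in_Mon_general ρ

end Paper
end

section
/- Let K and G be compact Lie groups, M a smooth manifold with a smooth left G-action, and σ ∈ hom(K,G). Let fix_{σ(K)}(M) = {y ∈ M : σ(k)·y = y for all k ∈ K} and let H = C_G(σ(K)) be the centralizer of σ(K) in G (note H maps fix_{σ(K)}(M) to itself). Give G × fix_{σ(K)}(M) the right H-action (g,y)·h = (gh, h⁻¹·y) and let Q be its quotient space with the quotient topology. Then the map (g,y) ↦ (c_g∘σ, g·y), where c_g(a) = gag⁻¹, descends to a homeomorphism from Q onto the subspace {(φ,y) ∈ P : φ = c_g∘σ for some g ∈ G} of P, and this homeomorphism is equivariant for the left G-actions, where G acts on Q by g'·[(g,y)] = [(g'g, y)]. -/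
open scoped Manifold

noncomputable section Paper

/-!
The map `(g, y) ↦ (c_g ∘ σ, g • y)` factors as the shear homeomorphism `(g, y) ↦ (g, g • y)`
onto `{(g, m) : g⁻¹ • m ∈ fix_{σ(K)}(M)}`, followed by the restriction of
`c_σ × id : G × M → hom(K,G) × M` to the preimage of the target. Since `G` is compact and
`hom(K,G)` is Hausdorff, `c_σ × id` is proper, hence closed, so the restriction is a closed
surjection and therefore a quotient map. Its fibres are exactly the `C_G(σ(K))`-orbits.
-/

namespace Topology.IsQuotientMap

variable {X Y : Type*} [TopologicalSpace X] [TopologicalSpace Y] {f : X → Y}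

/-- `IsQuotientMap.homeomorph` is the special case `s = Setoid.ker f`. -/
noncomputable def homeomorphOfSetoid (hf : IsQuotientMap f) (s : Setoid X)
    (hs : ∀ a b, s a b ↔ f a = f b) : Quotient s ≃ₜ Y where
  toEquiv := Equiv.ofBijective (Quotient.lift f fun a b h => (hs a b).1 h)
    ⟨fun a b => Quotient.inductionOn₂ a b fun a b h => Quotient.sound ((hs a b).2 h),
      fun y => (hf.surjective y).elim fun x hx => ⟨Quotient.mk s x, hx⟩⟩
  continuous_toFun := hf.continuous.quotient_lift _
  continuous_invFun := by
    rw [hf.continuous_iff]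
    convert continuous_quotient_mk' (s := s) using 1
    funext x
    exact (Equiv.ofBijective _ _).left_inv (Quotient.mk s x)

@[simp]
theorem homeomorphOfSetoid_mk (hf : IsQuotientMap f) (s : Setoid X)
    (hs : ∀ a b, s a b ↔ f a = f b) (x : X) : hf.homeomorphOfSetoid s hs (Quotient.mk s x) = f x :=
  rfl

end Topology.IsQuotientMap

section OrbitPart

open Topology

variable {K G : Type*} [Group K] [TopologicalSpace K] [Group G] [TopologicalSpace G]
  [IsTopologicalGroup G]

@[simp]
theorem conjCMH_apply (g : G) (φ : ContinuousMonoidHom K G) (k : K) :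
    conjCMH g φ k = g * φ k * g⁻¹ :=
  rfl

theorem conjCMH_mul (a b : G) (φ : ContinuousMonoidHom K G) :
    conjCMH (a * b) φ = conjCMH a (conjCMH b φ) := by
  ext k
  simp only [conjCMH_apply]
  group

theorem conjCMH_eq_conjCMH_iff (σ : ContinuousMonoidHom K G) (a b : G) :
    conjCMH a σ = conjCMH b σ ↔ a⁻¹ * b ∈ Subgroup.centralizer (Set.range σ) := by
  simp only [Subgroup.mem_centralizer_iff, Set.forall_mem_range, ContinuousMonoidHom.ext_iff,
    conjCMH_apply]
  refine forall_congr' fun k => ?_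
  constructor
  · intro h
    calc σ k * (a⁻¹ * b) = a⁻¹ * (a * σ k * a⁻¹) * b := by group
      _ = a⁻¹ * b * σ k := by rw [h]; group
  · intro h
    calc a * σ k * a⁻¹ = a * (σ k * (a⁻¹ * b)) * b⁻¹ := by group
      _ = b * σ k * b⁻¹ := by rw [h]; group

theorem continuous_conjCMH (σ : ContinuousMonoidHom K G) :
    Continuous fun g : G => conjCMH g σ := by
  rw [(ContinuousMonoidHom.isInducing_toContinuousMap K G).continuous_iff]
  apply ContinuousMap.continuous_of_continuous_uncurry
  exact (continuous_fst.mul ((map_continuous σ).comp continuous_snd)).mul continuous_fst.inv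

variable {M : Type*} [MulAction G M]

/-- `fix_{σ(K)}(M)`. -/
abbrev fixedSet (σ : ContinuousMonoidHom K G) : Set M :=
  {y | ∀ k : K, σ k • y = y}

/-- The part of `P` lying over the conjugacy orbit of `σ`. -/
abbrev conjOrbitPairs (σ : ContinuousMonoidHom K G) : Set (ContinuousMonoidHom K G × M) :=
  {p | p ∈ actPairs K G M ∧ ∃ g : G, p.1 = conjCMH g σ}

theorem conjCMH_mem_actPairs_iff (σ : ContinuousMonoidHom K G) (g : G) (m : M) :
    (conjCMH g σ, m) ∈ actPairs K G M ↔ g⁻¹ • m ∈ fixedSet σ := by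
  show (∀ k, (g * σ k * g⁻¹) • m = m) ↔ ∀ k, σ k • g⁻¹ • m = g⁻¹ • m
  simp only [mul_smul, smul_eq_iff_eq_inv_smul]

variable [TopologicalSpace M]

def fixedShear (σ : ContinuousMonoidHom K G) [ContinuousSMul G M] :
    G × fixedSet (M := M) σ ≃ₜ
      (Prod.map (fun g : G => conjCMH g σ) id ⁻¹' conjOrbitPairs σ : Set (G × M)) where
  toFun p := ⟨(p.1, p.1 • (p.2 : M)),
    (conjCMH_mem_actPairs_iff σ _ _).2 (by simp [p.2.2]), p.1, rfl⟩
  invFun p := ((p : G × M).1, ⟨(p : G × M).1⁻¹ • (p : G × M).2,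
    (conjCMH_mem_actPairs_iff σ _ _).1 p.2.1⟩)
  left_inv p := by simp
  right_inv p := by simp
  continuous_toFun := by fun_prop
  continuous_invFun := by fun_prop

def conjPairMap (σ : ContinuousMonoidHom K G) [ContinuousSMul G M] :
    G × fixedSet (M := M) σ → conjOrbitPairs (M := M) σ :=
  (conjOrbitPairs σ).restrictPreimage (Prod.map (fun g : G => conjCMH g σ) id) ∘ fixedShear σ

theorem coe_conjPairMap (σ : ContinuousMonoidHom K G) [ContinuousSMul G M]
    (p : G × fixedSet (M := M) σ) :
    (conjPairMap σ p : ContinuousMonoidHom K G × M) = (conjCMH p.1 σ, p.1 • (p.2 : M)) :=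
  rfl

theorem isQuotientMap_conjPairMap [T2Space G] [CompactSpace G] [ContinuousSMul G M]
    (σ : ContinuousMonoidHom K G) : IsQuotientMap (conjPairMap (M := M) σ) := by
  have hclosed : IsClosedMap (Prod.map (fun g : G => conjCMH g σ) (id : M → M)) :=
    ((continuous_conjCMH σ).isProperMap.prodMap isProperMap_id).isClosedMap
  have hsurj : Function.Surjective
      ((conjOrbitPairs (M := M) σ).restrictPreimage (Prod.map (fun g : G => conjCMH g σ) id)) := by
    rintro ⟨⟨φ, m⟩, hp, g, hg : φ = _⟩
    subst hg
    exact ⟨⟨(g, m), hp, g, rfl⟩, rfl⟩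
  have hrestrict := (hclosed.restrictPreimage _).isQuotientMap
    (((continuous_conjCMH σ).prodMap continuous_id).restrictPreimage) hsurj
  exact hrestrict.comp (fixedShear σ).isQuotientMap

theorem conjPairMap_eq_iff (σ : ContinuousMonoidHom K G) [ContinuousSMul G M]
    (a b : G × fixedSet (M := M) σ) :
    cosetSetoid (Subgroup.centralizer (Set.range σ)) (fixedSet σ) a b ↔
      conjPairMap σ a = conjPairMap σ b := by
  rw [← Subtype.coe_inj, coe_conjPairMap, coe_conjPairMap, Prod.mk.injEq,
    conjCMH_eq_conjCMH_iff]
  constructor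
  · rintro ⟨h, hh, hb, hy⟩
    rw [hb, hy, inv_mul_cancel_left, mul_smul, smul_inv_smul]
    exact ⟨hh, rfl⟩
  · rintro ⟨hh, hy⟩
    refine ⟨a.1⁻¹ * b.1, hh, by group, ?_⟩
    rw [mul_inv_rev, inv_inv, mul_smul, hy, inv_smul_smul]

end OrbitPart

theorem orbit_part_homeo_general {K : Type*} [TopologicalSpace K] [Group K]
    {dG : ℕ} {G : Type*} [TopologicalSpace G] [T2Space G]
    [ChartedSpace (EuclideanSpace ℝ (Fin dG)) G] [Group G] [IsTopologicalGroup G]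
    [CompactSpace G]
    {dM : ℕ} {M : Type*} [TopologicalSpace M]
    [ChartedSpace (EuclideanSpace ℝ (Fin dM)) M]
    [MulAction G M]
    (hsm : ContMDiff ((𝓡 dG).prod (𝓡 dM)) (𝓡 dM) (⊤ : ℕ∞) (fun p : G × M => p.1 • p.2))
    (σ : ContinuousMonoidHom K G) :
    ∃ e : Quotient (cosetSetoid (Subgroup.centralizer (Set.range (⇑σ : K → G)))
          {y : M | ∀ k : K, σ k • y = y}) ≃ₜ
        {p : ContinuousMonoidHom K G × M // p ∈ actPairs K G M ∧ ∃ g : G, p.1 = conjCMH g σ},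
      (∀ (g : G) (y : {y : M | ∀ k : K, σ k • y = y}),
          ((e (Quotient.mk _ (g, y)) : ContinuousMonoidHom K G × M)) =
            (conjCMH g σ, g • (y : M))) ∧
      (∀ (g' g : G) (y : {y : M | ∀ k : K, σ k • y = y}),
          ((e (Quotient.mk _ (g' * g, y)) : ContinuousMonoidHom K G × M)) =
            (conjCMH g' ((e (Quotient.mk _ (g, y)) : ContinuousMonoidHom K G × M).1),
              g' • ((e (Quotient.mk _ (g, y)) : ContinuousMonoidHom K G × M).2))) := by
  have : ContinuousSMul G M := ⟨hsm.continuous⟩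
  refine ⟨(isQuotientMap_conjPairMap σ).homeomorphOfSetoid _ (conjPairMap_eq_iff σ),
    fun g y => rfl, fun g' g y => ?_⟩
  simp only [Topology.IsQuotientMap.homeomorphOfSetoid_mk, coe_conjPairMap, conjCMH_mul, mul_smul]

/-- the `G`-orbit of the `σ`-part of `hom(K,G⋉M)` is `G ×_H fix_σ(K)(M)`,
where `H = C_G(σ(K))`. -/
theorem orbit_part_homeo {dK : ℕ} {K : Type*} [TopologicalSpace K] [T2Space K]
    [ChartedSpace (EuclideanSpace ℝ (Fin dK)) K] [Group K] [IsTopologicalGroup K]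
    [LieGroup (𝓡 dK) (⊤ : ℕ∞) K] [CompactSpace K]
    {dG : ℕ} {G : Type*} [TopologicalSpace G] [T2Space G]
    [ChartedSpace (EuclideanSpace ℝ (Fin dG)) G] [Group G] [IsTopologicalGroup G]
    [LieGroup (𝓡 dG) (⊤ : ℕ∞) G] [CompactSpace G]
    {dM : ℕ} {M : Type*} [TopologicalSpace M] [T2Space M]
    [ChartedSpace (EuclideanSpace ℝ (Fin dM)) M] [IsManifold (𝓡 dM) (⊤ : ℕ∞) M]
    [MulAction G M]
    (hsm : ContMDiff ((𝓡 dG).prod (𝓡 dM)) (𝓡 dM) (⊤ : ℕ∞) (fun p : G × M => p.1 • p.2))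
    (σ : ContinuousMonoidHom K G) :
    ∃ e : Quotient (cosetSetoid (Subgroup.centralizer (Set.range (⇑σ : K → G)))
          {y : M | ∀ k : K, σ k • y = y}) ≃ₜ
        {p : ContinuousMonoidHom K G × M // p ∈ actPairs K G M ∧ ∃ g : G, p.1 = conjCMH g σ},
      (∀ (g : G) (y : {y : M | ∀ k : K, σ k • y = y}),
          ((e (Quotient.mk _ (g, y)) : ContinuousMonoidHom K G × M)) =
            (conjCMH g σ, g • (y : M))) ∧
      (∀ (g' g : G) (y : {y : M | ∀ k : K, σ k • y = y}),
          ((e (Quotient.mk _ (g' * g, y)) : ContinuousMonoidHom K G × M)) =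
            (conjCMH g' ((e (Quotient.mk _ (g, y)) : ContinuousMonoidHom K G × M).1),
              g' • ((e (Quotient.mk _ (g, y)) : ContinuousMonoidHom K G × M).2))) :=
  orbit_part_homeo_general hsm σ

end Paper
end

section
/- Let K and G be compact Lie groups, M a smooth manifold with a smooth left G-action, x ∈ M, and σ ∈ hom(K,G) with σ(K) contained in the stabilizer G_x = {g ∈ G : g·x = x}. Let σ_x ∈ hom(K, G_x) denote the corestriction of σ to G_x (a closed subgroup of G with the subspace topology). Then Mon(G_x; σ_x) ⊆ Mon(G⋉M; σ̄(x)) ⊆ Mon(G; σ) as subgroups of Aut(K). -/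
open scoped Manifold

noncomputable section Paper

/-! Since precomposition with `μ ∈ Aut(K)` preserves both generating relations, `μ` preserves the
class of a basepoint as soon as it moves the basepoint within its class. The maps
`φ ↦ (ι ∘ φ, x)` from `hom(K, G_x)` to `P` (with `ι : G_x → G` the inclusion) and `(φ, y) ↦ φ`
from `P` to `hom(K, G)` commute with precomposition and send generating relations to generating
relations, so they carry this criterion from one monodromy group to the next. -/

theorem Relation.EqvGen.map {α β : Type*} {r : α → α → Prop} {s : β → β → Prop} {a b : α}
    (hab : Relation.EqvGen r a b) (f : α → β) (h : ∀ a b, r a b → s (f a) (f b)) :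
    Relation.EqvGen s (f a) (f b) := by
  induction hab with
  | rel a b hr => exact .rel _ _ (h a b hr)
  | refl a => exact .refl _
  | symm a b _ ih => exact .symm _ _ ih
  | trans a b c _ _ ih₁ ih₂ => exact .trans _ _ _ ih₁ ih₂

section Monodromy

variable {K X : Type*} [Group K] [TopologicalSpace K]

theorem mapsTo_act_eqvGen_class (act : X → contAut K → X) {R : X → X → Prop} {μ : contAut K}
    (hR : ∀ a b, R a b → R (act a μ) (act b μ)) {a : X} (ha : Relation.EqvGen R a (act a μ)) :
    Set.MapsTo (act · μ) {z | Relation.EqvGen R a z} {z | Relation.EqvGen R a z} :=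
  fun _ hb => ha.trans _ _ _ (hb.map (act · μ) hR)

theorem mem_monOf_eqvGen_iff (act : X → contAut K → X) (hone : ∀ x, act x 1 = x)
    (hmul : ∀ x μ ν, act x (μ * ν) = act (act x μ) ν) {R : X → X → Prop}
    (hR : ∀ μ a b, R a b → R (act a μ) (act b μ)) (a : X) (μ : contAut K) :
    μ ∈ monOf act hone hmul {z | Relation.EqvGen R a z} ↔ Relation.EqvGen R a (act a μ) := by
  have hcancel : ∀ (ν : contAut K) b, act (act b ν) ν⁻¹ = b := fun ν b => by
    rw [← hmul, mul_inv_cancel, hone]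
  refine ⟨fun h => ?_, fun h => ?_⟩
  · have hmem : act a μ ∈ (act · μ) '' {z | Relation.EqvGen R a z} :=
      Set.mem_image_of_mem _ (.refl a)
    rwa [show (act · μ) '' _ = _ from h] at hmem
  · have hinv : Relation.EqvGen R a (act a μ⁻¹) := by
      simpa only [hcancel] using (h.map (act · μ⁻¹) (hR μ⁻¹)).symm
    refine (mapsTo_act_eqvGen_class act (hR μ) h).image_subset.antisymm fun b hb =>
      ⟨act b μ⁻¹, mapsTo_act_eqvGen_class act (hR μ⁻¹) hinv hb, ?_⟩
    simpa only [inv_inv] using hcancel μ⁻¹ b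

variable {G : Type*} [Group G] [TopologicalSpace G]

def Subgroup.continuousSubtype (H : Subgroup G) : ContinuousMonoidHom H G :=
  ⟨H.subtype, continuous_subtype_val⟩

theorem comp_precompCMH {H : Type*} [Group H] [TopologicalSpace H]
    (f : ContinuousMonoidHom H G) (φ : ContinuousMonoidHom K H) (μ : contAut K) :
    f.comp (precompCMH φ μ) = precompCMH (f.comp φ) μ :=
  rfl

theorem continuous_precompCMH (μ : contAut K) :
    Continuous fun φ : ContinuousMonoidHom K G => precompCMH φ μ :=
  ContinuousMonoidHom.continuous_comp_left ⟨(μ : MulAut K).toMonoidHom, μ.property.1⟩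

variable [IsTopologicalGroup G]

theorem homRel_precompCMH (μ : contAut K) {φ ψ : ContinuousMonoidHom K G} (h : homRel φ ψ) :
    homRel (precompCMH φ μ) (precompCMH ψ μ) := by
  rcases h with h | ⟨g, rfl⟩
  · exact .inl (h.map (continuous_precompCMH μ))
  · exact .inr ⟨g, rfl⟩

theorem mem_Mon_iff_eqvGen (ρ : ContinuousMonoidHom K G) (μ : contAut K) :
    μ ∈ Mon ρ ↔ Relation.EqvGen homRel ρ (precompCMH ρ μ) :=
  mem_monOf_eqvGen_iff _ _ _ (fun μ _ _ => homRel_precompCMH μ) ρ μ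

variable {M : Type*} [TopologicalSpace M] [MulAction G M]

theorem actRel_precompCMH (μ : contAut K) {p q : ContinuousMonoidHom K G × M}
    (h : actRel p q) : actRel (precompCMH p.1 μ, p.2) (precompCMH q.1 μ, q.2) := by
  rcases h with h | ⟨g, rfl⟩
  · refine .inl <| (h.map (((continuous_precompCMH μ).comp continuous_fst).prodMk
      continuous_snd)).mono ?_
    rintro _ ⟨r, hr, rfl⟩ k
    exact hr ((μ : MulAut K) k)
  · exact .inr ⟨g, rfl⟩

theorem mem_MonAct_iff_eqvGen (σ : ContinuousMonoidHom K G) (x : M) (μ : contAut K) :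
    μ ∈ MonAct σ x ↔ Relation.EqvGen actRel (σ, x) (precompCMH σ μ, x) :=
  mem_monOf_eqvGen_iff _ _ _ (fun μ _ _ => actRel_precompCMH μ) (σ, x) μ

theorem homRel_of_actRel {p q : ContinuousMonoidHom K G × M} (h : actRel p q) :
    homRel p.1 q.1 := by
  rcases h with h | ⟨g, rfl⟩
  · exact .inl (h.joined.map continuous_fst)
  · exact .inr ⟨g, rfl⟩

theorem actRel_of_homRel_stabilizer {x : M}
    {φ ψ : ContinuousMonoidHom K (MulAction.stabilizer G x)} (h : homRel φ ψ) :
    actRel ((MulAction.stabilizer G x).continuousSubtype.comp φ, x)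
      ((MulAction.stabilizer G x).continuousSubtype.comp ψ, x) := by
  rcases h with ⟨⟨γ⟩⟩ | ⟨g, rfl⟩
  · exact .inl ⟨γ.map ((ContinuousMonoidHom.continuous_comp_right _).prodMk continuous_const),
      fun t k => (γ t k).2⟩
  · exact .inr ⟨g, Prod.ext rfl (g.2 : (g : G) • x = x).symm⟩

end Monodromy

theorem Mon_stabilizer_le_Mon_action_le_Mon_general {K : Type*} [TopologicalSpace K] [Group K]
    {G : Type*} [TopologicalSpace G] [Group G] [IsTopologicalGroup G]
    {M : Type*} [TopologicalSpace M] [MulAction G M]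
    (σ : ContinuousMonoidHom K G) (x : M)
    (σx : ContinuousMonoidHom K (MulAction.stabilizer G x))
    (hσx : ∀ k : K, ((σx k : G)) = σ k) :
    Mon σx ≤ MonAct σ x ∧ MonAct σ x ≤ Mon σ := by
  have hσ : (MulAction.stabilizer G x).continuousSubtype.comp σx = σ := ContinuousMonoidHom.ext hσx
  refine ⟨fun μ hμ => ?_, fun μ hμ => ?_⟩
  · rw [mem_Mon_iff_eqvGen] at hμ
    rw [mem_MonAct_iff_eqvGen, ← hσ, ← comp_precompCMH]
    exact hμ.map (fun φ => (_, x)) fun _ _ => actRel_of_homRel_stabilizer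
  · rw [mem_MonAct_iff_eqvGen] at hμ
    rw [mem_Mon_iff_eqvGen]
    exact hμ.map Prod.fst fun _ _ => homRel_of_actRel

/-- `Mon(G_x;σ_x) ⊆ Mon(G⋉M;σ̄(x)) ⊆ Mon(G;σ)`. -/
theorem Mon_stabilizer_le_Mon_action_le_Mon {dK : ℕ} {K : Type*} [TopologicalSpace K] [T2Space K]
    [ChartedSpace (EuclideanSpace ℝ (Fin dK)) K] [Group K] [IsTopologicalGroup K]
    [LieGroup (𝓡 dK) ((⊤ : ℕ∞) : WithTop ℕ∞) K] [CompactSpace K]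
    {dG : ℕ} {G : Type*} [TopologicalSpace G] [T2Space G]
    [ChartedSpace (EuclideanSpace ℝ (Fin dG)) G] [Group G] [IsTopologicalGroup G]
    [LieGroup (𝓡 dG) ((⊤ : ℕ∞) : WithTop ℕ∞) G] [CompactSpace G]
    {dM : ℕ} {M : Type*} [TopologicalSpace M] [T2Space M]
    [ChartedSpace (EuclideanSpace ℝ (Fin dM)) M] [IsManifold (𝓡 dM) ((⊤ : ℕ∞) : WithTop ℕ∞) M]
    [MulAction G M]
    (hsm : ContMDiff ((𝓡 dG).prod (𝓡 dM)) (𝓡 dM) (⊤ : ℕ∞) (fun p : G × M => p.1 • p.2))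
    (σ : ContinuousMonoidHom K G) (x : M) (hx : ∀ k : K, σ k ∈ MulAction.stabilizer G x)
    (σx : ContinuousMonoidHom K (MulAction.stabilizer G x))
    (hσx : ∀ k : K, ((σx k : G)) = σ k) :
    Mon σx ≤ MonAct σ x ∧ MonAct σ x ≤ Mon σ :=
  Mon_stabilizer_le_Mon_action_le_Mon_general σ x σx hσx

end Paper
end
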